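/- arXiv:2511.09371 — 4 statements merged into one kernel-verified Lean document; each statement's English description precedes it below -/
import Mathlib

section
/- Let C be a category with a strict initial object, and suppose given commutative squares Z' → X' ← U' over Z → X ← U (i.e., maps Z' → Z, X' → X, U' → U making both squares commute). If i : Z → X and j : U → X are disjoint, then i' : Z' → X' and j' : U' → X' are disjoint. Furthermore, if both squares are Cartesian and j is a complement of i, then j' is a complement of i'. -/
open CategoryTheory Limits

universe v u

/-- Maps `i : Z ⟶ X` and `j : U ⟶ X` are *disjoint* if every commutative square
over them has initial top-left vertex. -/
def AreDisjoint {C : Type u} [Category.{v} C] {Z X U : C} (i : Z ⟶ X) (j : U ⟶ X) : Prop :=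
  ∀ (A : C) (a : A ⟶ Z) (b : A ⟶ U), a ≫ i = b ≫ j → Nonempty (IsInitial A)

/-- `j : U ⟶ X` is a *complement* of `i : Z ⟶ X`: `j` is a monomorphism disjoint from `i`,
and every map to `X` disjoint from `i` factors through `j` (necessarily uniquely, as `j` is
a monomorphism); i.e. `j` is a terminal object of the sieve of maps disjoint from `i`. -/
def IsComplementOf {C : Type u} [Category.{v} C] {Z X U : C} (i : Z ⟶ X) (j : U ⟶ X) : Prop :=
  Mono j ∧ AreDisjoint i j ∧
    ∀ (V : C) (v : V ⟶ X), AreDisjoint i v → ∃ k : V ⟶ U, k ≫ j = v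

/-- Given commutative squares `Z' → X' ← U'` over `Z → X ← U` in a category with a strict
initial object: if `i` and `j` are disjoint then so are `i'` and `j'`; and if moreover
both squares are Cartesian and `j` is a complement of `i`, then `j'` is a complement
of `i'`. -/
theorem disjoint_and_complement_pullback {C : Type u} [Category.{v} C]
    [HasInitial C] [HasStrictInitialObjects C]
    {Z X U Z' X' U' : C} {i : Z ⟶ X} {j : U ⟶ X} {i' : Z' ⟶ X'} {j' : U' ⟶ X'}
    {z : Z' ⟶ Z} {x : X' ⟶ X} {u : U' ⟶ U}
    (hsq₁ : i' ≫ x = z ≫ i) (hsq₂ : j' ≫ x = u ≫ j)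
    (hdisj : AreDisjoint i j) :
    AreDisjoint i' j' ∧
      (IsPullback i' z x i → IsPullback j' u x j → IsComplementOf i j →
        IsComplementOf i' j') := by
  constructor
  · intro A a b hab
    exact hdisj A (a ≫ z) (b ≫ u) (by
      rw [Category.assoc, Category.assoc, ← hsq₁, ← hsq₂,
        ← Category.assoc, ← Category.assoc, hab])
  · intro hp₁ hp₂ hcomp
    obtain ⟨hmono, -, hfac⟩ := hcomp
    refine ⟨?_, ?_, ?_⟩
    · constructor
      intro W f g hfg
      apply hp₂.hom_ext hfg
      have : (f ≫ u) ≫ j = (g ≫ u) ≫ j := by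
        rw [Category.assoc, Category.assoc, ← hsq₂, ← Category.assoc, ← Category.assoc, hfg]
      exact hmono.right_cancellation _ _ this
    · intro A a b hab
      exact hdisj A (a ≫ z) (b ≫ u) (by
        rw [Category.assoc, Category.assoc, ← hsq₁, ← hsq₂,
          ← Category.assoc, ← Category.assoc, hab])
    · intro V v hv
      have hdv : AreDisjoint i (v ≫ x) := by
        intro A a b hab
        have hcomm : (b ≫ v) ≫ x = a ≫ i := by rw [Category.assoc, hab]
        exact hv A (hp₁.lift (b ≫ v) a hcomm) b (hp₁.lift_fst _ _ _)
      obtain ⟨k₀, hk₀⟩ := hfac V (v ≫ x) hdv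
      have hcomm : v ≫ x = k₀ ≫ j := hk₀.symm
      exact ⟨hp₂.lift v k₀ hcomm, hp₂.lift_fst _ _ _⟩
end

section
/- Let f : A → X and g : B → X be maps in a category C, and let yo^∅ : C → Psh^∅(C) be the Yoneda embedding into reduced presheaves (presheaves of spaces preserving terminal objects). Then f and g are disjoint in C if and only if yo^∅(f) and yo^∅(g) are disjoint in Psh^∅(C); consequently, g is a complement of f in C if and only if yo^∅(g) is a complement of yo^∅(f) in Psh^∅(C). -/
/-!
A reduced presheaf all of whose elements live over initial objects is initial: at such objects
every reduced presheaf is a point. Elements of a presheaf are maps from representables, so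
disjointness of maps into a representable can be tested on representables, where it is
disjointness in `C`. For complements, a map into `yoRed X` that factors elementwise through
the mono `yoRed g` factors through it, and full faithfulness of Yoneda transports factorizations
back to `C`.
-/

open CategoryTheory Limits Opposite

universe v u

variable (C : Type u) [Category.{v} C]

/-- The category of *reduced* presheaves on `C`: presheaves sending initial
objects of `C` (terminal objects of `Cᵒᵖ`) to terminal types (singletons). -/
def ReducedPsh : Type max u (v + 1) :=
  ObjectProperty.FullSubcategory (fun F : Cᵒᵖ ⥤ Type v =>
    ∀ (I : C), IsInitial I → Nonempty (Unique (F.obj (op I))))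

instance : Category (ReducedPsh C) :=
  ObjectProperty.FullSubcategory.category _

/-- The Yoneda embedding lands in reduced presheaves. -/
def yoRed : C ⥤ ReducedPsh C :=
  ObjectProperty.lift _ yoneda
    (fun X I hI => ⟨⟨⟨hI.to X⟩, fun a => hI.hom_ext a _⟩⟩)

instance : (yoRed C).Full := inferInstanceAs (ObjectProperty.lift _ _ _).Full

instance : (yoRed C).Faithful := inferInstanceAs (ObjectProperty.lift _ _ _).Faithful

variable {C}

lemma AreDisjoint.comp_right {Z X U W : C} {i : Z ⟶ X} {j : U ⟶ X} (h : AreDisjoint i j)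
    (k : W ⟶ U) : AreDisjoint i (k ≫ j) :=
  fun A a b hab => h A a (b ≫ k) (by rw [hab, Category.assoc])

lemma mono_yoRed_map_iff {B X : C} (g : B ⟶ X) : Mono ((yoRed C).map g) ↔ Mono g :=
  ⟨(yoRed C).mono_of_mono_map,
    fun _ => (ObjectProperty.ι _).mono_of_mono_map (inferInstanceAs (Mono (yoneda.map g)))⟩

namespace ReducedPsh

lemma nonempty_isInitial_of_forall_elements (P : ReducedPsh C)
    (h : ∀ (c : Cᵒᵖ), P.obj.obj c → Nonempty (IsInitial c.unop)) :
    Nonempty (IsInitial P) := by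
  have unique (Q : ReducedPsh C) (c : Cᵒᵖ) (x : P.obj.obj c) : Unique (Q.obj.obj c) :=
    (Q.property _ (h c x).some).some
  refine ⟨IsInitial.ofUniqueHom (fun Q => ObjectProperty.homMk
    { app c := TypeCat.ofHom fun x => (unique Q c x).default
      naturality c d m := by
        ext x
        let := unique Q d (P.obj.map m x)
        exact Subsingleton.elim _ _ }) fun Q a => ?_⟩
  refine ObjectProperty.hom_ext _ ?_
  ext c x
  let := unique Q c x
  exact Subsingleton.elim _ _

def homOfElement (P : ReducedPsh C) {c : Cᵒᵖ} (x : P.obj.obj c) : (yoRed C).obj c.unop ⟶ P :=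
  ObjectProperty.homMk (yonedaEquiv.symm x)

lemma homOfElement_comp {P : ReducedPsh C} {X : C} (v : P ⟶ (yoRed C).obj X) {c : Cᵒᵖ}
    (x : P.obj.obj c) : P.homOfElement x ≫ v = (yoRed C).map (v.hom.app c x) := by
  refine ObjectProperty.hom_ext _ ?_
  exact (yonedaEquiv_symm_naturality_right _ v.hom x).trans
    (yonedaEquiv.symm_apply_eq.2 (yonedaEquiv_yoneda_map _).symm)

end ReducedPsh

lemma areDisjoint_yoRed_map_iff {A X : C} (f : A ⟶ X) {P : ReducedPsh C}
    (v : P ⟶ (yoRed C).obj X) :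
    AreDisjoint ((yoRed C).map f) v ↔
      ∀ (c : Cᵒᵖ) (x : P.obj.obj c), AreDisjoint f (v.hom.app c x) := by
  constructor
  · intro hd c x T a b hab
    refine ⟨(hd _ ((yoRed C).map a) ((yoRed C).map b ≫ P.homOfElement x) ?_).some
      |>.isInitialOfObj _ _⟩
    rw [Category.assoc, ReducedPsh.homOfElement_comp, ← Functor.map_comp, hab]
    exact (yoRed C).map_comp _ _
  · intro hd Q a b hab
    refine Q.nonempty_isInitial_of_forall_elements fun c y => ?_
    refine hd c (b.hom.app c y) _ (a.hom.app c y) (𝟙 _) ?_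
    exact (congrArg (fun t => t.hom.app c y) hab).trans (Category.id_comp _).symm

theorem areDisjoint_iff_areDisjoint_yoRed_map {A B X : C} (f : A ⟶ X) (g : B ⟶ X) :
    AreDisjoint f g ↔ AreDisjoint ((yoRed C).map f) ((yoRed C).map g) := by
  rw [areDisjoint_yoRed_map_iff]
  refine ⟨fun h c x => h.comp_right x, fun h => ?_⟩
  have hB : AreDisjoint f (𝟙 B ≫ g) := h (op B) (𝟙 B)
  rwa [Category.id_comp] at hB

lemma exists_comp_yoRed_map_eq {B X : C} {g : B ⟶ X} [Mono g] {P : ReducedPsh C}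
    (v : P ⟶ (yoRed C).obj X)
    (h : ∀ (c : Cᵒᵖ) (x : P.obj.obj c), ∃ k : c.unop ⟶ B, k ≫ g = v.hom.app c x) :
    ∃ K : P ⟶ (yoRed C).obj B, K ≫ (yoRed C).map g = v := by
  choose k hk using h
  refine ⟨ObjectProperty.homMk
    { app c := TypeCat.ofHom (k c)
      naturality c d m := by
        ext x
        refine (cancel_mono g).1 ?_
        change k d (P.obj.map m x) ≫ g = (m.unop ≫ k c x) ≫ g
        rw [hk, Category.assoc, hk]
        exact v.hom.naturality_apply m x }, ?_⟩
  refine ObjectProperty.hom_ext _ ?_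
  ext c x
  exact hk c x

/-- Maps `f : A ⟶ X` and `g : B ⟶ X` in `C` are disjoint iff their images under the
Yoneda embedding into reduced presheaves are disjoint; consequently `g` is a complement
of `f` in `C` iff `(yoRed C).map g` is a complement of `(yoRed C).map f`. -/
theorem areDisjoint_iff_yoneda_and_complement_iff_yoneda
    {A B X : C} (f : A ⟶ X) (g : B ⟶ X) :
    (AreDisjoint f g ↔ AreDisjoint ((yoRed C).map f) ((yoRed C).map g)) ∧
      (IsComplementOf f g ↔ IsComplementOf ((yoRed C).map f) ((yoRed C).map g)) := by
  refine ⟨areDisjoint_iff_areDisjoint_yoRed_map f g, ?_⟩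
  rw [IsComplementOf, IsComplementOf, mono_yoRed_map_iff, ← areDisjoint_iff_areDisjoint_yoRed_map]
  refine and_congr_right fun _ => and_congr_right fun _ =>
    ⟨fun hmax P v hv => ?_, fun hmax V v hv => ?_⟩
  · exact exists_comp_yoRed_map_eq v fun c x => hmax _ _ ((areDisjoint_yoRed_map_iff f v).1 hv c x)
  · obtain ⟨K, hK⟩ := hmax _ _ ((areDisjoint_iff_areDisjoint_yoRed_map f v).1 hv)
    exact ⟨(yoRed C).preimage K, (yoRed C).map_injective (by simpa using hK)⟩
end

section
/- Let E' be a collection of morphisms in a category C containing all equivalences and stable under composition, base change, and taking diagonals. Let τ be a Grothendieck topology on C, and let E be the collection of maps f : X → Y such that X admits a small τ-cover by maps X' → X in E' with the composite X' → X → Y also in E'. Then E contains all equivalences and is stable under composition, base change, and taking diagonals. -/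
open CategoryTheory Limits

universe v u

variable {C : Type u} [Category.{v} C]

/-- Given a Grothendieck topology `τ` and a class `E'` of morphisms, `localClass τ E' f`
holds for `f : X ⟶ Y` when `X` admits a small `τ`-cover by maps `X' ⟶ X` in `E'` whose
composites `X' ⟶ X ⟶ Y` are also in `E'`. -/
def localClass (τ : GrothendieckTopology C) (E' : MorphismProperty C) :
    MorphismProperty C := fun X _Y f =>
  ∃ R : Presieve X, Sieve.generate R ∈ τ X ∧
    ∀ ⦃W : C⦄ ⦃g : W ⟶ X⦄, R g → E' g ∧ E' (g ≫ f)

/-!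
Each property is checked on a cover of the source. For a composite `X ⟶ Y ⟶ Z`, a cover of `X`
adapted to `f` is refined by the pullbacks of a cover of `Y` adapted to `g`. For the diagonal, the
cover adapted to `f` already works: for a chart `a : W ⟶ X` we have
`a ≫ Δ_f = Δ_{a ≫ f} ≫ (a ×_Y a)`, and `a ×_Y a` is a composite of base changes of `a`.
-/

lemma MorphismProperty.comp_diagonal_mem [HasPullbacks C] {E' : MorphismProperty C}
    [E'.IsStableUnderBaseChange] [E'.IsStableUnderComposition] (hE' : E' ≤ E'.diagonal)
    {W X Y : C} {a : W ⟶ X} {f : X ⟶ Y} (ha : E' a) (haf : E' (a ≫ f)) :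
    E' (a ≫ pullback.diagonal f) := by
  rw [pullback.comp_diagonal]
  exact E'.comp_mem _ _ (hE' _ haf) (E'.pullbackMap ha ha rfl rfl)

section

variable (τ : GrothendieckTopology C) {E' : MorphismProperty C}

lemma le_localClass [E'.ContainsIdentities] : E' ≤ localClass τ E' := fun X _ f hf =>
  ⟨Presieve.singleton (𝟙 X), by simp, by
    rintro _ _ ⟨⟩
    exact ⟨E'.id_mem X, by simpa using hf⟩⟩

instance localClass_isStableUnderBaseChange [HasPullbacks C] [E'.IsStableUnderBaseChange] :
    (localClass τ E').IsStableUnderBaseChange where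
  of_isPullback {_ _ _ _ _ _ f' _} sq := by
    rintro ⟨R, hR, hRE⟩
    refine ⟨Presieve.pullbackArrows f' R, τ.toPretopology.pullbacks f' R hR, ?_⟩
    rintro _ _ ⟨_, b, hb⟩
    have pb := IsPullback.of_hasPullback b f'
    exact ⟨E'.of_isPullback pb (hRE hb).1, E'.of_isPullback (pb.paste_vert sq) (hRE hb).2⟩

instance localClass_isStableUnderComposition [HasPullbacks C] [E'.IsStableUnderBaseChange]
    [E'.IsStableUnderComposition] : (localClass τ E').IsStableUnderComposition where
  comp_mem f g := by
    rintro ⟨R, hR, hRE⟩ ⟨S, hS, hSE⟩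
    refine ⟨R.bind fun _ a _ => Presieve.pullbackArrows (a ≫ f) S,
      τ.toPretopology.transitive R _ hR fun _ a _ => τ.toPretopology.pullbacks (a ≫ f) S hS, ?_⟩
    rintro _ _ ⟨_, _, a, ha, ⟨_, b, hb⟩, rfl⟩
    have pb := IsPullback.of_hasPullback b (a ≫ f)
    refine ⟨E'.comp_mem _ _ (E'.of_isPullback pb (hSE hb).1) (hRE ha).1, ?_⟩
    rw [Category.assoc, ← Category.assoc a, ← pullback.condition_assoc]
    exact E'.comp_mem _ _ (E'.of_isPullback pb.flip (hRE ha).2) (hSE hb).2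

lemma localClass_le_diagonal [HasPullbacks C] [E'.IsStableUnderBaseChange]
    [E'.IsStableUnderComposition] (hE' : E' ≤ E'.diagonal) :
    localClass τ E' ≤ (localClass τ E').diagonal := by
  rintro _ _ f ⟨R, hR, hRE⟩
  exact ⟨R, hR, fun _ a ha =>
    ⟨(hRE ha).1, MorphismProperty.comp_diagonal_mem hE' (hRE ha).1 (hRE ha).2⟩⟩

end

/-- If `E'` contains all isomorphisms and is stable under composition, base change and
taking diagonals, then so is the class `E = localClass τ E'` of maps that are
`τ`-locally on the source given by maps in `E'`. -/
theorem localClass_isos_comp_baseChange_diagonal [HasPullbacks C]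
    (τ : GrothendieckTopology C) (E' : MorphismProperty C)
    (hiso : ∀ {X Y : C} (e : X ⟶ Y), IsIso e → E' e)
    (hcomp : ∀ {X Y Z : C} (f : X ⟶ Y) (g : Y ⟶ Z), E' f → E' g → E' (f ≫ g))
    (hbc : ∀ {X Y Y' S : C} {f : X ⟶ S} {g : Y ⟶ S} {f' : Y' ⟶ Y} {g' : Y' ⟶ X},
      IsPullback f' g' g f → E' g → E' g')
    (hdiag : ∀ {X Y : C} (f : X ⟶ Y), E' f → E' (pullback.diagonal f)) :
    (∀ {X Y : C} (e : X ⟶ Y), IsIso e → localClass τ E' e) ∧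
    (∀ {X Y Z : C} (f : X ⟶ Y) (g : Y ⟶ Z),
      localClass τ E' f → localClass τ E' g → localClass τ E' (f ≫ g)) ∧
    (∀ {X Y Y' S : C} {f : X ⟶ S} {g : Y ⟶ S} {f' : Y' ⟶ Y} {g' : Y' ⟶ X},
      IsPullback f' g' g f → localClass τ E' g → localClass τ E' g') ∧
    (∀ {X Y : C} (f : X ⟶ Y), localClass τ E' f → localClass τ E' (pullback.diagonal f)) := by
  have : E'.ContainsIdentities := ⟨fun X => hiso (𝟙 X) inferInstance⟩
  have : E'.IsStableUnderComposition := ⟨hcomp⟩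
  have : E'.IsStableUnderBaseChange := ⟨hbc⟩
  exact ⟨fun e he => le_localClass τ e (hiso e he),
    fun f g => (localClass τ E').comp_mem f g,
    fun sq => (localClass τ E').of_isPullback sq,
    fun f => localClass_le_diagonal τ (fun _ _ f => hdiag f) f⟩
end

section
/- Let φ : D → D' be a transformation of presheaves D, D' : C^op → Cat, let f : X → Y be a map in C, and let {Y_i → Y} be a family of maps such that the functors {D'(Y) → D'(Y_i)} are jointly conservative. Suppose for each i that D and D' have right base change for f against Y_i → Y (i.e., the pullbacks X_i = X ×_Y Y_i exist and the squares D(Y) → D(X), D(Y_i) → D(X_i) are right adjointable for both D and D'), and that φ is right adjointable at each base change f_i : X_i → Y_i. Then φ is right adjointable at f. -/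
/-! The horizontal functors of each square are restrictions `f^*`, the vertical ones are
`φ`, `yᵢ^*` and `pᵢ^*`. Pasting the square of `φ` at `f` on top of the base-change square of `D'`
gives, by naturality of `φ` at `yᵢ` and `pᵢ`, the same square as pasting the base-change square of
`D` on top of the square of `φ` at `fᵢ`. Taking mates commutes with pasting, so the mate of the
first composite is invertible; cancelling the invertible base-change mate of `D'` shows that
`yᵢ^*` inverts each component of the mate of `φ` at `f`, and joint conservativity concludes. -/

open CategoryTheory Category Limits Opposite

universe w v u v₂ u₂ v₃ u₃ v₄ u₄

section Mates

variable {A : Type u} {B : Type u₂} {E : Type u₃} {F : Type u₄}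
variable [Category.{v} A] [Category.{v₂} B] [Category.{v₃} E] [Category.{v₄} F]
variable {G : A ⥤ E} {H : B ⥤ F} {L₁ : A ⥤ B} {R₁ : B ⥤ A} {L₂ : E ⥤ F} {R₂ : F ⥤ E}

/-- The mate of a strictly commuting square of left adjoints. -/
noncomputable def mateOfEq (a₁ : L₁ ⊣ R₁) (a₂ : L₂ ⊣ R₂)
    (h : G ⋙ L₂ = L₁ ⋙ H) : R₁ ⋙ G ⟶ H ⋙ R₂ :=
  mateEquiv a₁ a₂ (eqToHom h)

end Mates

variable {C : Type u} [Category.{v} C]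

/-- Functoriality of a `Cat`-valued presheaf on a commuting square. -/
theorem map_sq (D : Cᵒᵖ ⥤ Cat.{v₂, u₂})
    {X' X Y' Y : C} {f : X ⟶ Y} {f' : X' ⟶ Y'} {p : X' ⟶ X} {q : Y' ⟶ Y}
    (w : f' ≫ q = p ≫ f) :
    (D.map f.op).toFunctor ⋙ (D.map p.op).toFunctor = (D.map q.op).toFunctor ⋙ (D.map f'.op).toFunctor := by
  calc (D.map f.op).toFunctor ⋙ (D.map p.op).toFunctor = (D.map f.op ≫ D.map p.op).toFunctor := rfl
    _ = (D.map ((p ≫ f).op)).toFunctor := by rw [op_comp, D.map_comp]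
    _ = (D.map ((f' ≫ q).op)).toFunctor := by rw [w]
    _ = (D.map q.op ≫ D.map f'.op).toFunctor := by rw [op_comp, D.map_comp]
    _ = (D.map q.op).toFunctor ⋙ (D.map f'.op).toFunctor := rfl

/-- Strict naturality square of a transformation of `Cat`-valued presheaves. -/
theorem nat_sq {D D' : Cᵒᵖ ⥤ Cat.{v₂, u₂}} (φ : D ⟶ D') {X Y : C} (f : X ⟶ Y) :
    (φ.app (op Y)).toFunctor ⋙ (D'.map f.op).toFunctor = (D.map f.op).toFunctor ⋙ (φ.app (op X)).toFunctor :=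
  congrArg Cat.Hom.toFunctor (φ.naturality f.op).symm

section MatePasting

open scoped TwoSquare

variable {A₁ B₁ A₂ B₂ A₃ B₃ : Type*} [Category A₁] [Category B₁] [Category A₂] [Category B₂]
variable [Category A₃] [Category B₃]
variable {L₁ : A₁ ⥤ B₁} {R₁ : B₁ ⥤ A₁} {L₂ : A₂ ⥤ B₂} {R₂ : B₂ ⥤ A₂} {L₃ : A₃ ⥤ B₃} {R₃ : B₃ ⥤ A₃}

theorem isIso_mateOfEq_iff (a₁ : L₁ ⊣ R₁) (a₂ : L₂ ⊣ R₂) {G G' : A₁ ⥤ A₂} {H H' : B₁ ⥤ B₂}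
    (hG : G = G') (hH : H = H') (h : G ⋙ L₂ = L₁ ⋙ H) (h' : G' ⋙ L₂ = L₁ ⋙ H') :
    IsIso (mateOfEq a₁ a₂ h) ↔ IsIso (mateOfEq a₁ a₂ h') := by
  subst hG hH
  rfl

theorem mateOfEq_vComp (a₁ : L₁ ⊣ R₁) (a₂ : L₂ ⊣ R₂) (a₃ : L₃ ⊣ R₃)
    {G₁ : A₁ ⥤ A₂} {H₁ : B₁ ⥤ B₂} {G₂ : A₂ ⥤ A₃} {H₂ : B₂ ⥤ B₃}
    (h₁ : G₁ ⋙ L₂ = L₁ ⋙ H₁) (h₂ : G₂ ⋙ L₃ = L₂ ⋙ H₂) :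
    mateOfEq a₁ a₂ h₁ ≫ᵥ mateOfEq a₂ a₃ h₂ =
      mateOfEq a₁ a₃ (show (G₁ ⋙ G₂) ⋙ L₃ = L₁ ⋙ H₁ ⋙ H₂ by
        rw [Functor.assoc, h₂, ← Functor.assoc, h₁, Functor.assoc]) := by
  refine (mateEquiv_vcomp a₁ a₂ a₃ _ _).symm.trans (congrArg _ ?_)
  ext
  simp [TwoSquare.hComp, eqToHom_map, eqToHom_app]

end MatePasting

namespace CategoryTheory.TwoSquare

variable {A₁ A₂ A₃ B₁ B₂ B₃ : Type*} [Category A₁] [Category A₂] [Category A₃]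
variable [Category B₁] [Category B₂] [Category B₃]
variable {T : A₁ ⥤ B₁} {L : A₁ ⥤ A₂} {R : B₁ ⥤ B₂} {M : A₂ ⥤ B₂}
variable {L' : A₂ ⥤ A₃} {R' : B₂ ⥤ B₃} {M' : A₃ ⥤ B₃}

theorem isIso_vComp {w : TwoSquare T L R M} {w' : TwoSquare M L' R' M'}
    (hw : IsIso w.natTrans) (hw' : IsIso w'.natTrans) : IsIso (w ≫ᵥ w').natTrans :=
  inferInstanceAs
    (IsIso (_ ≫ Functor.whiskerRight w.natTrans R' ≫ _ ≫ Functor.whiskerLeft L w'.natTrans ≫ _))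

theorem isIso_map_app_of_isIso_vComp {w : TwoSquare T L R M} {w' : TwoSquare M L' R' M'}
    (h : IsIso (w ≫ᵥ w').natTrans) (hw' : IsIso w'.natTrans) (X : A₁) :
    IsIso (R'.map (w.natTrans.app X)) := by
  have : IsIso (R'.map (w.natTrans.app X) ≫ w'.natTrans.app (L.obj X)) := by
    simpa [vComp] using NatIso.isIso_app_of_isIso (w ≫ᵥ w').natTrans X
  exact IsIso.of_isIso_comp_right _ (w'.natTrans.app (L.obj X))

end CategoryTheory.TwoSquare

/-- Locality on the target of right adjointability.
Let `φ : D ⟶ D'` be a transformation of presheaves of categories, `f : X ⟶ Y` a map,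
and `{yᵢ : Yᵢ ⟶ Y}` a `D'`-pseudocover (the functors `D'(Y) ⥤ D'(Yᵢ)` are jointly
conservative).  If `D` and `D'` have right base change for `f` against each `yᵢ`
(the Beck–Chevalley maps `f_* ⋙ yᵢ^* ⟶ pᵢ^* ⋙ (fᵢ)_*` are invertible), and `φ` is
right adjointable at each base change `fᵢ : Xᵢ ⟶ Yᵢ`, then `φ` is right adjointable
at `f`. -/
theorem right_adjointable_local_on_target
    {D D' : Cᵒᵖ ⥤ Cat.{v₂, u₂}} (φ : D ⟶ D')
    {X Y : C} (f : X ⟶ Y)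
    {ι : Type w} {Yi : ι → C} {Xi : ι → C}
    (yi : ∀ i, Yi i ⟶ Y) (fi : ∀ i, Xi i ⟶ Yi i) (pi : ∀ i, Xi i ⟶ X)
    (sq : ∀ i, IsPullback (fi i) (pi i) (yi i) f)
    -- right adjoints `f_*` of the pullback functors, for `D` and `D'`
    {Rf : ↑(D.obj (op X)) ⥤ ↑(D.obj (op Y))} (aRf : (D.map f.op).toFunctor ⊣ Rf)
    {Rf' : ↑(D'.obj (op X)) ⥤ ↑(D'.obj (op Y))} (aRf' : (D'.map f.op).toFunctor ⊣ Rf')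
    {Rfi : ∀ i, ↑(D.obj (op (Xi i))) ⥤ ↑(D.obj (op (Yi i)))}
    (aRfi : ∀ i, (D.map (fi i).op).toFunctor ⊣ Rfi i)
    {Rfi' : ∀ i, ↑(D'.obj (op (Xi i))) ⥤ ↑(D'.obj (op (Yi i)))}
    (aRfi' : ∀ i, (D'.map (fi i).op).toFunctor ⊣ Rfi' i)
    -- `{yᵢ}` is a `D'`-pseudocover
    (hconsv : ∀ {M N : ↑(D'.obj (op Y))} (g : M ⟶ N),
      (∀ i, IsIso ((D'.map (yi i).op).toFunctor.map g)) → IsIso g)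
    -- `D` and `D'` have right base change for `f` against each `yᵢ`
    (hbcD : ∀ i, IsIso (mateOfEq aRf (aRfi i) (map_sq D (sq i).w).symm))
    (hbcD' : ∀ i, IsIso (mateOfEq aRf' (aRfi' i) (map_sq D' (sq i).w).symm))
    -- `φ` is right adjointable at each `fᵢ`
    (hφ : ∀ i, IsIso (mateOfEq (aRfi i) (aRfi' i) (nat_sq φ (fi i)))) :
    IsIso (mateOfEq aRf aRf' (nat_sq φ f)) := by
  set τ := mateOfEq aRf aRf' (nat_sq φ f)
  suffices ∀ M, IsIso (τ.app M) from NatIso.isIso_of_isIso_app τ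
  intro M
  refine hconsv _ fun i ↦ ?_
  have : IsIso (TwoSquare.vComp τ (mateOfEq aRf' (aRfi' i) (map_sq D' (sq i).w).symm)).natTrans := by
    have := TwoSquare.isIso_vComp (hbcD i) (hφ i)
    rw [mateOfEq_vComp] at this ⊢
    exact (isIso_mateOfEq_iff aRf (aRfi' i) (nat_sq φ (yi i)) (nat_sq φ (pi i)) _ _).mpr this
  exact TwoSquare.isIso_map_app_of_isIso_vComp this (hbcD' i) M
end
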